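/- For every s with 0 ≤ s < 1/2, there is no Markovian avoidance coupling of two s-lazy walkers on the looped three-vertex complete graph K_3^*. -/

import Mathlib

open MeasureTheory ProbabilityTheory

/-- `X` is a faithful `s`-lazy walk on the looped complete graph `K_3^*`: at
each step it stays put with probability `s` and moves to each of the other two
vertices with probability `(1 - s)/2`. -/
def IsLazyWalk3 {Ω : Type} [MeasurableSpace Ω] (μ : Measure Ω) (s : ℝ)
    (X : ℕ → Ω → Fin 3) : Prop :=
  ∀ (t : ℕ) (v : ℕ → Fin 3),
    μ {ω | ∀ u ≤ t + 1, X u ω = v u} =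
      μ {ω | ∀ u ≤ t, X u ω = v u} *
        ENNReal.ofReal (if v (t + 1) = v t then s else (1 - s) / 2)

/-- The two walkers `X` (moving first in each round) and `Y` almost surely
never collide: for every `t`, `X t ≠ Y t` and `X (t+1) ≠ Y t`. -/
def AvoidsPairAE {Ω : Type} [MeasurableSpace Ω] (μ : Measure Ω)
    (X Y : ℕ → Ω → Fin 3) : Prop :=
  ∀ᵐ ω ∂μ, ∀ t : ℕ, X t ω ≠ Y t ω ∧ X (t + 1) ω ≠ Y t ω

/-- The coupling of the two walkers `X, Y` (moving alternately in the order
`X 0, Y 0, X 1, Y 1, …`) is Markovian: there are transition rules `f, g` such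
that conditionally on the history, `X (t+1)` is distributed as `f (X t, Y t)`
and `Y (t+1)` is distributed as `g (X (t+1), Y t)`. -/
def IsMarkovianPair {Ω : Type} [MeasurableSpace Ω] (μ : Measure Ω)
    (X Y : ℕ → Ω → Fin 3) : Prop :=
  ∃ f g : Fin 3 × Fin 3 → PMF (Fin 3),
    (∀ (t : ℕ) (v u : ℕ → Fin 3) (w : Fin 3),
      μ {ω | (∀ r ≤ t, X r ω = v r ∧ Y r ω = u r) ∧ X (t + 1) ω = w} =
        μ {ω | ∀ r ≤ t, X r ω = v r ∧ Y r ω = u r} * f (v t, u t) w) ∧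
    (∀ (t : ℕ) (v u : ℕ → Fin 3) (x w : Fin 3),
      μ {ω | ((∀ r ≤ t, X r ω = v r ∧ Y r ω = u r) ∧ X (t + 1) ω = x) ∧
             Y (t + 1) ω = w} =
        μ {ω | (∀ r ≤ t, X r ω = v r ∧ Y r ω = u r) ∧ X (t + 1) ω = x} *
          g (x, u t) w)

/-!
Take starting points `z ≠ q` of `X` and `Y` with positive probability and let `p` be the third
vertex; write `C = (1 - s)/2` for the probability of a move. While `X` zigzags `z, p, z, …`,
avoidance pins `Y` at `q`, so the walk law of `X` and the Markov rules give
`C = g (p, q) q * f (p, q) z`. While `Y` zigzags `q, z, q, …`, avoidance pins `X` at `p` from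
time `1` on, and summing out `X 0` gives `C = f (p, q) p * g (p, q) z`. Multiplying,
`C² = (f p * f z) (g q * g z) ≤ 1/16`, which contradicts `C > 1/4`.
-/

lemma fin3_eq_of_ne {a b c x : Fin 3} (hab : a ≠ b) (hca : c ≠ a) (hcb : c ≠ b)
    (hxa : x ≠ a) (hxb : x ≠ b) : x = c := by
  revert a b c x; decide

lemma fin3_exists_ne_ne (a b : Fin 3) : ∃ c, c ≠ a ∧ c ≠ b := by
  revert a b; decide

lemma PMF.toReal_mul_toReal_le {α : Type*} (π : PMF α) {a b : α} (hab : a ≠ b) :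
    (π a).toReal * (π b).toReal ≤ 1 / 4 := by
  classical
  have hsum : π a + π b ≤ 1 := by
    simpa [Finset.sum_pair hab, π.tsum_coe] using
      ENNReal.sum_le_tsum (f := fun x => π x) ({a, b} : Finset α)
  have hsumR : (π a).toReal + (π b).toReal ≤ 1 := by
    rw [← ENNReal.toReal_add (π.apply_ne_top a) (π.apply_ne_top b)]
    exact ENNReal.toReal_le_of_le_ofReal zero_le_one (by simpa using hsum)
  nlinarith [sq_nonneg ((π a).toReal - (π b).toReal), ENNReal.toReal_nonneg (a := π a),
    ENNReal.toReal_nonneg (a := π b)]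

lemma PMF.le_quarter_of_ofReal_eq_mul {α : Type*} (π ρ : PMF α) {a b c d : α} (hab : a ≠ b)
    (hcd : c ≠ d) {x : ℝ} (hx : 0 ≤ x) (h₁ : ENNReal.ofReal x = ρ c * π b)
    (h₂ : ENNReal.ofReal x = π a * ρ d) : x ≤ 1 / 4 := by
  have h₁' := congrArg ENNReal.toReal h₁
  have h₂' := congrArg ENNReal.toReal h₂
  rw [ENNReal.toReal_ofReal hx, ENNReal.toReal_mul] at h₁' h₂'
  have hsq : x * x ≤ 1 / 4 * (1 / 4) :=
    calc x * x = ((π a).toReal * (π b).toReal) * ((ρ c).toReal * (ρ d).toReal) := by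
          nth_rw 1 [h₁', h₂']; ring
      _ ≤ 1 / 4 * (1 / 4) :=
          mul_le_mul (π.toReal_mul_toReal_le hab) (ρ.toReal_mul_toReal_le hcd) (by positivity)
            (by norm_num)
  nlinarith

def alternating {α : Type*} (a b : α) (n : ℕ) : α := if Even n then a else b

lemma alternating_succ_ne {α : Type*} {a b : α} (hab : a ≠ b) (n : ℕ) :
    alternating a b (n + 1) ≠ alternating a b n := by
  by_cases hn : Even n <;> simp [alternating, Nat.even_add_one, hn, hab, hab.symm]

lemma ne_alternating {α : Type*} {a b c : α} (hca : c ≠ a) (hcb : c ≠ b) (n : ℕ) :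
    c ≠ alternating a b n := by
  unfold alternating; split_ifs <;> assumption

section Coupling

open Function

variable {Ω : Type} {X Y : ℕ → Ω → Fin 3}

def pathEvent (X : ℕ → Ω → Fin 3) (t : ℕ) (v : ℕ → Fin 3) : Set Ω :=
  {ω | ∀ r ≤ t, X r ω = v r}

def jointPath (X Y : ℕ → Ω → Fin 3) (t : ℕ) (v u : ℕ → Fin 3) : Set Ω :=
  {ω | ∀ r ≤ t, X r ω = v r ∧ Y r ω = u r}

lemma jointPath_succ (t : ℕ) (v u : ℕ → Fin 3) :
    jointPath X Y (t + 1) v u =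
      jointPath X Y t v u ∩ {ω | X (t + 1) ω = v (t + 1)} ∩ {ω | Y (t + 1) ω = u (t + 1)} := by
  ext ω
  simp only [jointPath, Set.mem_inter_iff, Set.mem_ofPred_eq, Nat.le_succ_iff, or_imp,
    forall_and, forall_eq]
  tauto

lemma pairwise_disjoint_jointPath_update_zero (t : ℕ) (v u : ℕ → Fin 3) :
    Pairwise (Disjoint on fun w => jointPath X Y t (update v 0 w) u) := by
  intro w w' hne
  refine Set.disjoint_left.2 fun ω h h' => hne ?_
  simpa using (h 0 t.zero_le).1.symm.trans (h' 0 t.zero_le).1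

variable [MeasurableSpace Ω] {μ : Measure Ω} {f g : Fin 3 × Fin 3 → PMF (Fin 3)} {s : ℝ}

/-- `IsMarkovianPair μ X Y` unfolds to `∃ f g, HasTransitionRules μ X Y f g`. -/
def HasTransitionRules (μ : Measure Ω) (X Y : ℕ → Ω → Fin 3)
    (f g : Fin 3 × Fin 3 → PMF (Fin 3)) : Prop :=
  (∀ (t : ℕ) (v u : ℕ → Fin 3) (w : Fin 3),
    μ (jointPath X Y t v u ∩ {ω | X (t + 1) ω = w}) = μ (jointPath X Y t v u) * f (v t, u t) w) ∧
  (∀ (t : ℕ) (v u : ℕ → Fin 3) (x w : Fin 3),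
    μ (jointPath X Y t v u ∩ {ω | X (t + 1) ω = x} ∩ {ω | Y (t + 1) ω = w}) =
      μ (jointPath X Y t v u ∩ {ω | X (t + 1) ω = x}) * g (x, u t) w)

lemma measurableSet_jointPath (hXm : ∀ t, Measurable (X t)) (hYm : ∀ t, Measurable (Y t))
    (t : ℕ) (v u : ℕ → Fin 3) : MeasurableSet (jointPath X Y t v u) := by
  simp only [jointPath, Set.ofPred_forall]
  exact .iInter fun r => .iInter fun _ =>
    (hXm r (measurableSet_singleton _)).inter (hYm r (measurableSet_singleton _))

lemma IsLazyWalk3.measure_pathEvent (hX : IsLazyWalk3 μ s X) {v : ℕ → Fin 3}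
    (hv : ∀ n, v (n + 1) ≠ v n) (t : ℕ) :
    μ (pathEvent X t v) = μ {ω | X 0 ω = v 0} * ENNReal.ofReal ((1 - s) / 2) ^ t := by
  induction t with
  | zero => simp [pathEvent]
  | succ t ih =>
    rw [pow_succ, ← mul_assoc, ← ih]
    have h := hX t v
    rwa [if_neg (hv t)] at h

lemma HasTransitionRules.measure_jointPath_succ (h : HasTransitionRules μ X Y f g) (t : ℕ)
    (v u : ℕ → Fin 3) :
    μ (jointPath X Y (t + 1) v u) =
      μ (jointPath X Y t v u) * (f (v t, u t) (v (t + 1)) * g (v (t + 1), u t) (u (t + 1))) := by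
  rw [jointPath_succ, h.2, h.1, mul_assoc]

lemma HasTransitionRules.measure_iUnion_jointPath_succ (h : HasTransitionRules μ X Y f g)
    (hXm : ∀ t, Measurable (X t)) (hYm : ∀ t, Measurable (Y t)) {t : ℕ} (ht : t ≠ 0)
    (v u : ℕ → Fin 3) :
    μ (⋃ w, jointPath X Y (t + 1) (update v 0 w) u) =
      μ (⋃ w, jointPath X Y t (update v 0 w) u) *
        (f (v t, u t) (v (t + 1)) * g (v (t + 1), u t) (u (t + 1))) := by
  simp only [measure_iUnion (pairwise_disjoint_jointPath_update_zero _ v u)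
    (fun _ => measurableSet_jointPath hXm hYm _ _ u), ← ENNReal.tsum_mul_right,
    h.measure_jointPath_succ, update_of_ne ht, update_of_ne t.succ_ne_zero]

lemma AvoidsPairAE.exists_ne_measure_ne_zero [IsProbabilityMeasure μ]
    (hA : AvoidsPairAE μ X Y) :
    ∃ z q, z ≠ q ∧ μ {ω | X 0 ω = z} ≠ 0 ∧ μ {ω | Y 0 ω = q} ≠ 0 := by
  have hcover : (⋃ x : Fin 3 × Fin 3, {ω | (X 0 ω, Y 0 ω) = x}) = Set.univ :=
    Set.eq_univ_of_forall fun ω => Set.mem_iUnion.2 ⟨_, rfl⟩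
  obtain ⟨⟨z, q⟩, hpos⟩ := exists_measure_pos_of_not_measure_iUnion_null (μ := μ)
    (by simp [hcover] : μ (⋃ x : Fin 3 × Fin 3, {ω | (X 0 ω, Y 0 ω) = x}) ≠ 0)
  refine ⟨z, q, ?_, (hpos.trans_le (measure_mono fun ω h => ?_)).ne',
    (hpos.trans_le (measure_mono fun ω h => ?_)).ne'⟩
  · rintro rfl
    refine hpos.ne' (measure_eq_zero_iff_ae_notMem.2 ?_)
    filter_upwards [hA] with ω hω h
    simp only [Prod.mk.injEq] at h
    exact (hω 0).1 (h.1.trans h.2.symm)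
  · exact (Prod.mk.inj h).1
  · exact (Prod.mk.inj h).2

lemma AvoidsPairAE.pathEvent_succ_ae_eq (hA : AvoidsPairAE μ X Y) {v : ℕ → Fin 3} {q : Fin 3}
    (hv : ∀ n, v (n + 1) ≠ v n) (hq : ∀ n, q ≠ v n) (t : ℕ) :
    pathEvent X (t + 1) v =ᵐ[μ]
      (jointPath X Y t v (fun _ => q) ∩ {ω | X (t + 1) ω = v (t + 1)} : Set Ω) := by
  rw [Filter.eventuallyEq_set]
  filter_upwards [hA] with ω hω
  constructor
  · intro h
    refine ⟨fun r hr => ⟨h r (by omega), fin3_eq_of_ne (hv r) (hq (r + 1)) (hq r) ?_ ?_⟩,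
      h (t + 1) le_rfl⟩
    · exact fun e => (hω r).2 ((h (r + 1) (by omega)).trans e.symm)
    · exact fun e => (hω r).1 ((h r (by omega)).trans e.symm)
  · rintro ⟨h, hlast⟩ r hr
    rcases Nat.le_succ_iff.1 hr with hr | rfl
    exacts [(h r hr).1, hlast]

lemma AvoidsPairAE.pathEvent_ae_eq_iUnion (hA : AvoidsPairAE μ X Y) {u : ℕ → Fin 3}
    {p : Fin 3} (hu : ∀ n, u (n + 1) ≠ u n) (hp : ∀ n, p ≠ u n) (t : ℕ) :
    pathEvent Y t u =ᵐ[μ] ⋃ w, jointPath X Y t (update (fun _ => p) 0 w) u := by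
  rw [Filter.eventuallyEq_set]
  filter_upwards [hA] with ω hω
  simp only [Set.mem_iUnion]
  constructor
  · intro h
    refine ⟨X 0 ω, fun r hr => ⟨?_, h r hr⟩⟩
    rcases r with _ | n
    · simp
    rw [update_of_ne n.succ_ne_zero]
    refine fin3_eq_of_ne (hu n) (hp (n + 1)) (hp n) ?_ ?_
    · exact fun e => (hω (n + 1)).1 (e.trans (h (n + 1) hr).symm)
    · exact fun e => (hω n).2 (e.trans (h n (by omega)).symm)
  · rintro ⟨w, h⟩ r hr
    exact (h r hr).2

lemma ofReal_eq_mul_of_X_alternating [IsFiniteMeasure μ] (hX : IsLazyWalk3 μ s X)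
    (hA : AvoidsPairAE μ X Y) (hfg : HasTransitionRules μ X Y f g) (hs : s < 1)
    {p q z : Fin 3} (hpq : p ≠ q) (hpz : p ≠ z) (hqz : q ≠ z) (hz : μ {ω | X 0 ω = z} ≠ 0) :
    ENNReal.ofReal ((1 - s) / 2) = g (p, q) q * f (p, q) z := by
  set C := ENNReal.ofReal ((1 - s) / 2)
  have hv := alternating_succ_ne hpz.symm
  have hq := ne_alternating hqz hpq.symm
  have key : μ {ω | X 0 ω = z} * C * C =
      μ {ω | X 0 ω = z} * C * (g (p, q) q * f (p, q) z) :=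
    calc μ {ω | X 0 ω = z} * C * C = μ (pathEvent X 2 (alternating z p)) := by
          rw [hX.measure_pathEvent hv, sq, mul_assoc]; rfl
      _ = μ (jointPath X Y 1 (alternating z p) (fun _ => q)) * f (p, q) z := by
          rw [measure_congr (hA.pathEvent_succ_ae_eq hv hq 1), hfg.1]; rfl
      _ = μ (pathEvent X 1 (alternating z p)) * g (p, q) q * f (p, q) z := by
          rw [jointPath_succ, hfg.2, ← measure_congr (hA.pathEvent_succ_ae_eq hv hq 0)]; rfl
      _ = _ := by rw [hX.measure_pathEvent hv, pow_one, mul_assoc]; rfl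
  have hC : C ≠ 0 := ENNReal.ofReal_ne_zero_iff.2 (by linarith)
  exact (ENNReal.mul_right_inj (mul_ne_zero hz hC)
    (ENNReal.mul_ne_top (measure_ne_top μ _) ENNReal.ofReal_ne_top)).1 key

lemma ofReal_eq_mul_of_Y_alternating [IsFiniteMeasure μ] (hY : IsLazyWalk3 μ s Y)
    (hA : AvoidsPairAE μ X Y) (hfg : HasTransitionRules μ X Y f g) (hXm : ∀ t, Measurable (X t))
    (hYm : ∀ t, Measurable (Y t)) (hs : s < 1) {p q z : Fin 3} (hpq : p ≠ q) (hpz : p ≠ z)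
    (hqz : q ≠ z) (hq : μ {ω | Y 0 ω = q} ≠ 0) :
    ENNReal.ofReal ((1 - s) / 2) = f (p, q) p * g (p, q) z := by
  set C := ENNReal.ofReal ((1 - s) / 2)
  have hu := alternating_succ_ne hqz
  have hp := ne_alternating hpq hpz
  have key : μ {ω | Y 0 ω = q} * C ^ 2 * C =
      μ {ω | Y 0 ω = q} * C ^ 2 * (f (p, q) p * g (p, q) z) :=
    calc μ {ω | Y 0 ω = q} * C ^ 2 * C = μ (pathEvent Y 3 (alternating q z)) := by
          rw [hY.measure_pathEvent hu, pow_succ, mul_assoc]; rfl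
      _ = μ (⋃ w, jointPath X Y 2 (update (fun _ => p) 0 w) (alternating q z)) *
            (f (p, q) p * g (p, q) z) := by
          rw [measure_congr (hA.pathEvent_ae_eq_iUnion hu hp 3),
            hfg.measure_iUnion_jointPath_succ hXm hYm two_ne_zero]; rfl
      _ = _ := by
          rw [← measure_congr (hA.pathEvent_ae_eq_iUnion hu hp 2), hY.measure_pathEvent hu]; rfl
  have hC : C ≠ 0 := ENNReal.ofReal_ne_zero_iff.2 (by linarith)
  exact (ENNReal.mul_right_inj (mul_ne_zero hq (pow_ne_zero 2 hC))
    (ENNReal.mul_ne_top (measure_ne_top μ _) (ENNReal.pow_ne_top ENNReal.ofReal_ne_top))).1 key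

end Coupling

theorem no_markovian_avoidance_coupling_K3star_general (s : ℝ)
    (hs1 : s < 1 / 2) :
    ¬ ∃ (Ω : Type) (_ : MeasurableSpace Ω) (μ : Measure Ω) (X Y : ℕ → Ω → Fin 3),
      IsProbabilityMeasure μ ∧ (∀ t, Measurable (X t)) ∧ (∀ t, Measurable (Y t)) ∧
      IsLazyWalk3 μ s X ∧ IsLazyWalk3 μ s Y ∧ AvoidsPairAE μ X Y ∧
      IsMarkovianPair μ X Y := by
  rintro ⟨Ω, _, μ, X, Y, _, hXm, hYm, hX, hY, hA, f, g, hfg⟩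
  obtain ⟨z, q, hzq, hz, hq⟩ := hA.exists_ne_measure_ne_zero
  obtain ⟨p, hpq, hpz⟩ := fin3_exists_ne_ne q z
  have hs : s < 1 := by linarith
  have hXpath := ofReal_eq_mul_of_X_alternating hX hA hfg hs hpq hpz hzq.symm hz
  have hYpath := ofReal_eq_mul_of_Y_alternating hY hA hfg hXm hYm hs hpq hpz hzq.symm hq
  have := (f (p, q)).le_quarter_of_ofReal_eq_mul (g (p, q)) hpz hzq.symm (by linarith)
    hXpath hYpath
  linarith

/-- For every `s` with `0 ≤ s < 1/2`, there is no Markovian avoidance coupling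
of two `s`-lazy walkers on the looped three-vertex complete graph `K_3^*`. -/
theorem no_markovian_avoidance_coupling_K3star (s : ℝ) (hs : 0 ≤ s)
    (hs1 : s < 1 / 2) :
    ¬ ∃ (Ω : Type) (_ : MeasurableSpace Ω) (μ : Measure Ω) (X Y : ℕ → Ω → Fin 3),
      IsProbabilityMeasure μ ∧ (∀ t, Measurable (X t)) ∧ (∀ t, Measurable (Y t)) ∧
      IsLazyWalk3 μ s X ∧ IsLazyWalk3 μ s Y ∧ AvoidsPairAE μ X Y ∧
      IsMarkovianPair μ X Y :=
  no_markovian_avoidance_coupling_K3star_general s hs1
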